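/- arXiv:1112.3756 — 5 statements merged into one kernel-verified Lean document; each statement's English description precedes it below -/
import Mathlib

section
/- Let n ≥ 1 and let pts₁,…,ptsₙ be points-to types, and set pts := ∇((pts₁,1/n),…,(ptsₙ,1/n)). Then pts is a least upper bound of {pts₁,…,ptsₙ} in the subtyping order: ptsᵢ ≤ pts for every i, and for every points-to type u with ptsᵢ ≤ u for all i, one has pts ≤ u. -/
/-- A points-to type: probabilities are nonnegative and each row sums to at most 1. -/
def IsPTS {Var : Type*} [Fintype Var] (pts : Var → Var → ℝ) : Prop :=
  (∀ x z, 0 ≤ pts x z) ∧ ∀ x, ∑ z, pts x z ≤ 1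

/-- The weighted combination ∇((pts₁,q₁),…,(ptsₙ,qₙ)). -/
def nabla {Var : Type*} [Fintype Var] {n : ℕ} (pts : Fin n → Var → Var → ℝ)
    (q : Fin n → ℝ) : Var → Var → ℝ :=
  fun x z => ∑ i, q i * pts i x z

/-- The subtyping relation on points-to types: pointwise inclusion of supports. -/
def ptsLe {Var : Type*} (pts pts' : Var → Var → ℝ) : Prop :=
  ∀ x, {z | 0 < pts x z} ⊆ {z | 0 < pts' x z}

theorem stmt4 {Var : Type*} [Fintype Var] {n : ℕ} (hn : 1 ≤ n)
    (pts : Fin n → Var → Var → ℝ) (hpts : ∀ i, IsPTS (pts i)) :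
    (∀ i, ptsLe (pts i) (nabla pts (fun _ => 1 / (n : ℝ)))) ∧
      ∀ u : Var → Var → ℝ, IsPTS u → (∀ i, ptsLe (pts i) u) →
        ptsLe (nabla pts (fun _ => 1 / (n : ℝ))) u := by
  have hq : 0 < 1 / (n : ℝ) := by positivity
  have hterm : ∀ x z i, 0 ≤ (1 / (n : ℝ)) * pts i x z :=
    fun x z i => mul_nonneg hq.le ((hpts i).1 x z)
  constructor
  · intro i x z hz
    simp only [Set.mem_setOf_eq] at hz ⊢
    exact Finset.sum_pos' (fun j _ => hterm x z j)
      ⟨i, Finset.mem_univ i, mul_pos hq hz⟩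
  · intro u hu hle x z hz
    simp only [Set.mem_setOf_eq, nabla] at hz
    obtain ⟨i, -, hi⟩ := Finset.exists_lt_of_sum_lt (f := fun _ : Fin n => (0:ℝ))
      (by simpa using hz)
    have : 0 < pts i x z := by
      by_contra h
      push_neg at h
      nlinarith [mul_nonpos_of_nonneg_of_nonpos (inv_nonneg.mpr (Nat.cast_nonneg n)) h]
    exact hle i x this
end

section
/- Soundness of the pointer-load rule: let pts be a points-to type, γ an environment with γ ⊨ pts, and x, y, z : Var with γ y = Sum.inr z. Then Function.update γ x (γ z) satisfies Function.update pts x (fun w => ∑_u pts y u * pts u w). -/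
/-- An environment γ satisfies a points-to type pts iff every variable holding a
symbolic address holds it with positive probability according to pts. -/
def Sat {Var : Type*} (γ : Var → ℤ ⊕ Var) (pts : Var → Var → ℝ) : Prop :=
  ∀ x z, γ x = Sum.inr z → 0 < pts x z

theorem stmt10 {Var : Type*} [Fintype Var] [DecidableEq Var]
    (pts : Var → Var → ℝ) (hpts : IsPTS pts)
    (γ : Var → ℤ ⊕ Var) (hγ : Sat γ pts) (x y z : Var)
    (hyz : γ y = Sum.inr z) :
    Sat (Function.update γ x (γ z))
      (Function.update pts x (fun w => ∑ u, pts y u * pts u w)) := by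
  intro v w hv
  rcases eq_or_ne v x with rfl | hne
  · rw [Function.update_self] at hv ⊢
    have hzw : 0 < pts z w := hγ z w hv
    have hyzpos : 0 < pts y z := hγ y z hyz
    have : 0 < pts y z * pts z w := mul_pos hyzpos hzw
    calc (0:ℝ) < pts y z * pts z w := this
      _ ≤ ∑ u, pts y u * pts u w := Finset.single_le_sum
          (fun u _ => mul_nonneg (hpts.1 y u) (hpts.1 u w)) (Finset.mem_univ z)
  · rw [Function.update_of_ne hne] at hv
    rw [Function.update_of_ne hne]
    exact hγ v w hv
end

section
/- Soundness of the pointer-store rule: let pts be a points-to type, γ an environment with γ ⊨ pts, x, z : Var with γ x = Sum.inr z, v : ℤ ⊕ Var a value, and A : Var → ℝ with 0 ≤ A w for all w and ∑_w A w ≤ 1, such that for every w, v = Sum.inr w implies A w > 0. Define pts' : Var → Var → ℝ by pts' t = pts t if pts x t = 0, and pts' t = (fun w => (1 - pts x t) * pts t w + pts x t * A w) if pts x t > 0. Then Function.update γ z v satisfies pts'. -/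
theorem stmt11 {Var : Type*} [Fintype Var] [DecidableEq Var]
    (pts : Var → Var → ℝ) (hpts : IsPTS pts)
    (γ : Var → ℤ ⊕ Var) (hγ : Sat γ pts) (x z : Var)
    (hxz : γ x = Sum.inr z) (v : ℤ ⊕ Var)
    (A : Var → ℝ) (hA0 : ∀ w, 0 ≤ A w) (hA1 : ∑ w, A w ≤ 1)
    (hvA : ∀ w, v = Sum.inr w → 0 < A w)
    (pts' : Var → Var → ℝ)
    (hpts' : ∀ t, pts' t =
      if pts x t = 0 then pts t
      else fun w => (1 - pts x t) * pts t w + pts x t * A w) :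
    Sat (Function.update γ z v) pts' := by
  obtain ⟨h0, h1⟩ := hpts
  have hxzpos : 0 < pts x z := hγ x z hxz
  intro t w hw
  rw [hpts' t]
  by_cases htz : t = z
  · subst htz
    rw [Function.update_self] at hw
    have hAw := hvA w hw
    rw [if_neg (ne_of_gt hxzpos)]
    have hle : pts x t ≤ 1 := le_trans
      (Finset.single_le_sum (fun i _ => h0 x i) (Finset.mem_univ t)) (h1 x)
    have := mul_nonneg (by linarith : (0:ℝ) ≤ 1 - pts x t) (h0 t w)
    nlinarith
  · rw [Function.update_of_ne htz] at hw
    have hptw : 0 < pts t w := hγ t w hw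
    by_cases h : pts x t = 0
    · rw [if_pos h]; exact hptw
    · rw [if_neg h]
      have hxt0 : 0 ≤ pts x t := h0 x t
      have hsum : pts x z + pts x t ≤ ∑ u, pts x u := by
        have hsub : ({z, t} : Finset Var) ⊆ Finset.univ := Finset.subset_univ _
        calc pts x z + pts x t = ∑ u ∈ ({z, t} : Finset Var), pts x u := by
              rw [Finset.sum_pair (Ne.symm htz)]
          _ ≤ ∑ u, pts x u := Finset.sum_le_sum_of_subset_of_nonneg hsub
              (fun i _ _ => h0 x i)
      have hlt : pts x t < 1 := by linarith [h1 x]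
      have := mul_nonneg hxt0 (hA0 w)
      nlinarith
end

section
/- Soundness of the fork-join (par) rule: let n ≥ 1, let pts, pts₁,…,ptsₙ be points-to types, and let F₁,…,Fₙ : (Var → Val) → (Var → Val) be state transformers such that for every i and every environment δ, if δ satisfies ∇((pts,1/n),((ptsⱼ)_{j≠i},1/n each)) — the combination with weight 1/n on pts and weight 1/n on each ptsⱼ with j ≠ i — then Fᵢ δ satisfies ptsᵢ. Then for every permutation θ of {1,…,n} and every environment γ with γ ⊨ pts, the environment (F_{θ(n)} ∘ ⋯ ∘ F_{θ(1)}) γ satisfies ∇((pts₁,1/n),…,(ptsₙ,1/n)). -/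
/-!
Satisfaction only asks for positivity, and every precondition gives positive weight `1/n` both to
`pts` and to the postcondition of every other thread. So the first thread starts from a state
satisfying its precondition, and each later thread starts from the postcondition of the thread
run just before it, which is a different thread. The final state satisfies the postcondition of
the last thread, which also has weight `1/n` in the final combination.
-/

section Sequential

variable {ι σ : Type*} {F : ι → σ → σ} {pre post : ι → σ → Prop}

theorem exists_post_foldl_of_nodup (hF : ∀ i δ, pre i δ → post i (F i δ))
    (hpre : ∀ i j δ, j ≠ i → post j δ → pre i δ) :
    ∀ l : List ι, l.Nodup → ∀ i δ, i ∉ l → post i δ →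
      ∃ j, post j (l.foldl (fun δ j => F j δ) δ)
  | [], _, i, _, _, hδ => ⟨i, hδ⟩
  | a :: t, hl, i, δ, hi, hδ => by
    obtain ⟨hat, ht⟩ := List.nodup_cons.mp hl
    exact exists_post_foldl_of_nodup hF hpre t ht a (F a δ) hat
      (hF a δ (hpre a i δ (List.ne_of_not_mem_cons hi) hδ))

theorem exists_post_foldl_of_nodup_of_ne_nil (hF : ∀ i δ, pre i δ → post i (F i δ))
    (hpre : ∀ i j δ, j ≠ i → post j δ → pre i δ) {γ : σ} (hγ : ∀ i, pre i γ)
    {l : List ι} (hl : l.Nodup) (hne : l ≠ []) :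
    ∃ j, post j (l.foldl (fun δ j => F j δ) γ) := by
  obtain ⟨a, t, rfl⟩ := List.exists_cons_of_ne_nil hne
  obtain ⟨hat, ht⟩ := List.nodup_cons.mp hl
  exact exists_post_foldl_of_nodup hF hpre t ht a (F a γ) hat (hF a γ (hγ a))

end Sequential

section Satisfaction

variable {Var : Type*} {γ : Var → ℤ ⊕ Var} {p q : Var → Var → ℝ}

theorem Sat.of_pos_imp (h : Sat γ p) (hpq : ∀ x z, 0 < p x z → 0 < q x z) : Sat γ q :=
  fun x z hx => hpq x z (h x z hx)

theorem Sat.const_mul {c : ℝ} (hc : 0 < c) (h : Sat γ p) : Sat γ (fun x z => c * p x z) :=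
  h.of_pos_imp fun _ _ => mul_pos hc

theorem Sat.add_right (hq : ∀ x z, 0 ≤ q x z) (h : Sat γ p) : Sat γ (fun x z => p x z + q x z) :=
  h.of_pos_imp fun x z hp => add_pos_of_pos_of_nonneg hp (hq x z)

theorem Sat.add_left (hp : ∀ x z, 0 ≤ p x z) (h : Sat γ q) : Sat γ (fun x z => p x z + q x z) :=
  h.of_pos_imp fun x z hq => add_pos_of_nonneg_of_pos (hp x z) hq

theorem Sat.sum {ι : Type*} {s : Finset ι} {r : ι → Var → Var → ℝ}
    (hr : ∀ j ∈ s, ∀ x z, 0 ≤ r j x z) {i : ι} (hi : i ∈ s) (h : Sat γ (r i)) :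
    Sat γ (fun x z => ∑ j ∈ s, r j x z) :=
  h.of_pos_imp fun x z hpos => Finset.sum_pos' (fun j hj => hr j hj x z) ⟨i, hi, hpos⟩

end Satisfaction

theorem stmt13_general {Var : Type*} [Fintype Var] {n : ℕ} (hn : 1 ≤ n)
    (pts : Var → Var → ℝ) (hpts : IsPTS pts)
    (ptsF : Fin n → Var → Var → ℝ) (hptsF : ∀ i, IsPTS (ptsF i))
    (F : Fin n → (Var → ℤ ⊕ Var) → (Var → ℤ ⊕ Var))
    -- premise of the rule (par^{prob}):
    -- Sᵢ : ∇{(pts,1/n),(ptsⱼ,1/n) | j ≠ i} → ptsᵢ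
    (hF : ∀ i : Fin n, ∀ δ : Var → ℤ ⊕ Var,
      Sat δ (fun x z => (1 / (n : ℝ)) * pts x z +
        ∑ j ∈ Finset.univ.erase i, (1 / (n : ℝ)) * ptsF j x z) →
      Sat (F i δ) (ptsF i)) :
    ∀ θ : Equiv.Perm (Fin n), ∀ γ : Var → ℤ ⊕ Var, Sat γ pts →
      Sat ((List.ofFn fun i : Fin n => F (θ i)).foldl (fun δ g => g δ) γ)
        (fun x z => ∑ i, (1 / (n : ℝ)) * ptsF i x z) := by
  intro θ γ hγ
  have hc : (0 : ℝ) < 1 / n := by positivity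
  have hweighted : ∀ j x z, 0 ≤ 1 / (n : ℝ) * ptsF j x z :=
    fun j x z => mul_nonneg hc.le ((hptsF j).1 x z)
  have hrun : (List.ofFn fun i => F (θ i)).foldl (fun δ g => g δ) γ =
      (List.ofFn θ).foldl (fun δ j => F j δ) γ := by
    rw [← Function.comp_def, ← List.map_ofFn, List.foldl_map]
  have hpre_of_post : ∀ i j δ, j ≠ i → Sat δ (ptsF j) →
      Sat δ (fun x z => 1 / (n : ℝ) * pts x z +
        ∑ k ∈ Finset.univ.erase i, 1 / (n : ℝ) * ptsF k x z) :=
    fun i j δ hji hδ => ((hδ.const_mul hc).sum (fun k _ => hweighted k)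
      (Finset.mem_erase.mpr ⟨hji, Finset.mem_univ j⟩)).add_left
        fun x z => mul_nonneg hc.le (hpts.1 x z)
  have hpre_init : ∀ i, Sat γ (fun x z => 1 / (n : ℝ) * pts x z +
      ∑ k ∈ Finset.univ.erase i, 1 / (n : ℝ) * ptsF k x z) :=
    fun i => (hγ.const_mul hc).add_right fun x z => Finset.sum_nonneg fun k _ => hweighted k x z
  have hne : List.ofFn θ ≠ [] := by
    rw [Ne, List.ofFn_eq_nil_iff]
    omega
  obtain ⟨j, hj⟩ := exists_post_foldl_of_nodup_of_ne_nil (post := fun i δ => Sat δ (ptsF i)) hF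
    hpre_of_post hpre_init (List.nodup_ofFn.mpr θ.injective) hne
  rw [hrun]
  exact (hj.const_mul hc).sum (fun k _ => hweighted k) (Finset.mem_univ j)

theorem stmt13 {Var : Type*} [Fintype Var] [DecidableEq Var] {n : ℕ} (hn : 1 ≤ n)
    (pts : Var → Var → ℝ) (hpts : IsPTS pts)
    (ptsF : Fin n → Var → Var → ℝ) (hptsF : ∀ i, IsPTS (ptsF i))
    (F : Fin n → (Var → ℤ ⊕ Var) → (Var → ℤ ⊕ Var))
    -- premise of the rule (par^{prob}):
    -- Sᵢ : ∇{(pts,1/n),(ptsⱼ,1/n) | j ≠ i} → ptsᵢ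
    (hF : ∀ i : Fin n, ∀ δ : Var → ℤ ⊕ Var,
      Sat δ (fun x z => (1 / (n : ℝ)) * pts x z +
        ∑ j ∈ Finset.univ.erase i, (1 / (n : ℝ)) * ptsF j x z) →
      Sat (F i δ) (ptsF i)) :
    ∀ θ : Equiv.Perm (Fin n), ∀ γ : Var → ℤ ⊕ Var, Sat γ pts →
      Sat ((List.ofFn fun i : Fin n => F (θ i)).foldl (fun δ g => g δ) γ)
        (fun x z => ∑ i, (1 / (n : ℝ)) * ptsF i x z) :=
  stmt13_general hn pts hpts ptsF hptsF F hF
end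

section
/- Soundness of the while rule: let n ≥ 1, let pts, pts₁,…,ptsₙ be points-to types, and let F : (Var → Val) → (Var → Val) be a state transformer such that for every i with 1 ≤ i ≤ n and every environment γ with γ ⊨ pts, the i-fold iterate F^[i] γ satisfies ptsᵢ. Then for every m with 1 ≤ m ≤ n and every environment γ with γ ⊨ pts, F^[m] γ satisfies ∇((pts₁,1/n),…,(ptsₙ,1/n)). -/
theorem stmt14 {Var : Type*} [Fintype Var] {n : ℕ} (hn : 1 ≤ n)
    (pts : Var → Var → ℝ) (hpts : IsPTS pts)
    (ptsF : ℕ → Var → Var → ℝ) (hptsF : ∀ i, 1 ≤ i → i ≤ n → IsPTS (ptsF i))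
    (F : (Var → ℤ ⊕ Var) → (Var → ℤ ⊕ Var))
    -- premise of the rule (whl₂^{prob}): S : pts →ⁱ ptsᵢ for each 1 ≤ i ≤ n
    (hF : ∀ i, 1 ≤ i → i ≤ n → ∀ γ : Var → ℤ ⊕ Var, Sat γ pts →
      Sat (F^[i] γ) (ptsF i)) :
    ∀ m, 1 ≤ m → m ≤ n → ∀ γ : Var → ℤ ⊕ Var, Sat γ pts →
      Sat (F^[m] γ)
        (fun x z => ∑ i ∈ Finset.Icc 1 n, (1 / (n : ℝ)) * ptsF i x z) := by
  intro m hm1 hmn γ hγ x z hx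
  have hn' : (0:ℝ) < n := by exact_mod_cast hn
  refine Finset.sum_pos' (fun i hi => ?_) ⟨m, Finset.mem_Icc.mpr ⟨hm1, hmn⟩, ?_⟩
  · simp only [Finset.mem_Icc] at hi
    exact mul_nonneg (by positivity) ((hptsF i hi.1 hi.2).1 x z)
  · have h := hF m hm1 hmn γ hγ x z hx
    positivity
end
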